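/- Let $a<b$ and let $g:[a,b]\to\mathbb{R}$ be continuous with $g(t)>0$ for all $t$. If $w:[a,b]\to\mathbb{R}$ is continuous and is a viscosity solution of $|w'|=g$ on $(a,b)$, then there exists $\bar t\in[a,b]$ such that for every $t\in(a,b)$ with $t<\bar t$ the function $w$ is differentiable at $t$ with $w'(t)=g(t)$, and for every $t\in(a,b)$ with $t>\bar t$ the function $w$ is differentiable at $t$ with $w'(t)=-g(t)$. In particular, $w$ is not differentiable at at most one point of $(a,b)$, and $|w'(t)|=g(t)$ for almost every $t\in(a,b)$. -/

import Mathlib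

open MeasureTheory

/-- `w` is a viscosity subsolution of `|w'| = g` on `(a,b)`. -/
def ViscositySubsolution (a b : ℝ) (g w : ℝ → ℝ) : Prop :=
  ∀ t0 ∈ Set.Ioo a b, ∀ φ : ℝ → ℝ, Differentiable ℝ φ →
    IsLocalMax (fun t => w t - φ t) t0 → |deriv φ t0| ≤ g t0

/-- `w` is a viscosity supersolution of `|w'| = g` on `(a,b)`. -/
def ViscositySupersolution (a b : ℝ) (g w : ℝ → ℝ) : Prop :=
  ∀ t0 ∈ Set.Ioo a b, ∀ φ : ℝ → ℝ, Differentiable ℝ φ →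
    IsLocalMin (fun t => w t - φ t) t0 → g t0 ≤ |deriv φ t0|

/-!
A supersolution with `g > 0` has no interior local minimum (test with `φ = 0`), so `w` increases
up to a maximum point `tbar` and decreases after it. Let `G` be a primitive of `g`. If `w - G`
increased somewhere, a barrier of positive slope would touch it from above at an interior point,
and `G` plus the barrier would violate the subsolution inequality; so `w - G` is nonincreasing.
Symmetrically, touching from below where `w` is nondecreasing shows that `w - G` is
nondecreasing there. Hence `w = G + const` to the left of `tbar`, and the reflection `t ↦ -t`
gives `w' = -g` to its right.
-/

open Set Filter Topology

theorem exists_isLocalMax_sub_of_lt {F : ℝ → ℝ} {x y : ℝ} (hxy : x < y)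
    (hF : ContinuousOn F (Icc x y)) (hFxy : F x < F y) :
    ∃ t₀ ∈ Ioo x y, ∃ ψ : ℝ → ℝ, Differentiable ℝ ψ ∧ 0 < deriv ψ t₀ ∧
      IsLocalMax (fun t => F t - ψ t) t₀ := by
  obtain ⟨t₁, ht₁, hFt₁⟩ : ∃ t₁ ∈ Ioo x y, F x < F t₁ := by
    have hFy : Tendsto F (𝓝[<] y) (𝓝 (F y)) := by
      rw [← nhdsWithin_Ioo_eq_nhdsLT hxy]
      exact (hF y (right_mem_Icc.2 hxy.le)).mono Ioo_subset_Icc_self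
    obtain ⟨t, hFt, ht⟩ := ((hFy.eventually (lt_mem_nhds hFxy)).and (Ioo_mem_nhdsLT hxy)).exists
    exact ⟨t, ht, hFt⟩
  set K := (F t₁ - F x) / 2 with hK_def
  have hK : 0 < K := by linarith
  have hy₁ : 0 < y - t₁ := by linarith [ht₁.2]
  set c := (|F y - F t₁| + 1) / (K * (y - t₁)) with hc_def
  have hc : 0 < c := by positivity
  set ψ : ℝ → ℝ := fun t => K * Real.exp (c * (t - t₁))
  have hψ : ∀ t, HasDerivAt ψ (K * (Real.exp (c * (t - t₁)) * c)) t := fun t =>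
    ((((hasDerivAt_id t).sub_const t₁).const_mul c).exp.const_mul K).congr_deriv (by simp)
  have hψc : Continuous ψ := by fun_prop
  -- `ψ` is `K` at `t₁`, smaller than `K` at `x` and steep enough to exceed `F y - F t₁ + K` at `y`
  have hendpoints : ∀ z ∈ Icc x y \ Ioo x y, F z - ψ z < F t₁ - ψ t₁ := by
    rw [Icc_sdiff_Ioo_same hxy.le]
    rintro z (rfl | rfl)
    · have : 0 < ψ z := by positivity
      simp only [ψ, sub_self, mul_zero, Real.exp_zero, mul_one]
      linarith
    · have hexp := Real.add_one_le_exp (c * (z - t₁))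
      have hcK : K * (c * (z - t₁)) = |F z - F t₁| + 1 := by
        rw [hc_def]; field_simp
      have := le_abs_self (F z - F t₁)
      simp only [ψ, sub_self, mul_zero, Real.exp_zero, mul_one]
      nlinarith
  obtain ⟨t₀, ht₀, hmax⟩ := isCompact_Icc.exists_isLocalMax_mem_open Ioo_subset_Icc_self
    (hF.sub hψc.continuousOn) (Ioo_subset_Icc_self ht₁) hendpoints isOpen_Ioo
  exact ⟨t₀, ht₀, ψ, fun t => (hψ t).differentiableAt, by rw [(hψ t₀).deriv]; positivity, hmax⟩

theorem MonotoneOn.nonneg_of_isLocalMin_sub {w φ : ℝ → ℝ} {s : Set ℝ} {t₀ φ' : ℝ}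
    (hw : MonotoneOn w s) (hs : s ∈ 𝓝 t₀) (hmin : IsLocalMin (fun t => w t - φ t) t₀)
    (hφ : HasDerivAt φ φ' t₀) : 0 ≤ φ' := by
  have hslope : ∀ᶠ t in 𝓝[<] t₀, 0 ≤ slope φ t₀ t := by
    filter_upwards [nhdsWithin_le_nhds (hmin.and hs), self_mem_nhdsWithin] with t ⟨hmin_t, hts⟩ htt
    have : w t ≤ w t₀ := hw hts (mem_of_mem_nhds hs) (le_of_lt htt)
    rw [slope_def_field]
    exact div_nonneg_of_nonpos (by linarith) (by linarith [show t < t₀ from htt])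
  exact ge_of_tendsto ((hasDerivAt_iff_tendsto_slope.1 hφ).mono_left (nhdsLT_le_nhdsNE t₀)) hslope

theorem ContinuousOn.exists_hasDerivAt_eq {g : ℝ → ℝ} {a b : ℝ} (hab : a ≤ b)
    (hg : ContinuousOn g (Icc a b)) :
    ∃ G : ℝ → ℝ, Differentiable ℝ G ∧ ∀ t ∈ Icc a b, HasDerivAt G (g t) t := by
  have hgE : Continuous (IccExtend hab ((Icc a b).domRestrict g)) :=
    (continuousOn_iff_continuous_domRestrict.1 hg).Icc_extend'
  refine ⟨fun t => ∫ s in a..t, IccExtend hab ((Icc a b).domRestrict g) s,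
    fun t => (hgE.integral_hasStrictDerivAt a t).hasDerivAt.differentiableAt, fun t ht => ?_⟩
  simpa [IccExtend_of_mem hab _ ht, domRestrict_apply] using
    (hgE.integral_hasStrictDerivAt a t).hasDerivAt

theorem monotoneOn_of_isMaxOn_right {w : ℝ → ℝ} {a b : ℝ} (hw : ContinuousOn w (Icc a b))
    (hmax : IsMaxOn w (Icc a b) b) (hmin : ∀ t ∈ Ioo a b, ¬ IsLocalMin w t) :
    MonotoneOn w (Icc a b) := by
  intro u hu v hv huv
  obtain ⟨m, hm, hm_min⟩ := isCompact_Icc.exists_isMinOn (nonempty_Icc.2 hu.2)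
    (hw.mono (Icc_subset_Icc hu.1 le_rfl))
  rcases hm.1.eq_or_lt with rfl | hum
  · exact hm_min ⟨huv, hv.2⟩
  rcases hm.2.eq_or_lt with rfl | hmb
  · exact (hmax hu).trans (hm_min ⟨huv, hv.2⟩)
  · exact absurd (hm_min.isLocalMin (Icc_mem_nhds hum hmb)) (hmin m ⟨hu.1.trans_lt hum, hmb⟩)

section Viscosity

variable {a b : ℝ} {g w G : ℝ → ℝ}

theorem ViscositySubsolution.mono {a' b' : ℝ} (h : ViscositySubsolution a b g w) (ha : a ≤ a')
    (hb : b' ≤ b) : ViscositySubsolution a' b' g w :=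
  fun t ht => h t (Ioo_subset_Ioo ha hb ht)

theorem ViscositySupersolution.mono {a' b' : ℝ} (h : ViscositySupersolution a b g w)
    (ha : a ≤ a') (hb : b' ≤ b) : ViscositySupersolution a' b' g w :=
  fun t ht => h t (Ioo_subset_Ioo ha hb ht)

theorem IsLocalMax.comp_neg {f : ℝ → ℝ} {t : ℝ} (h : IsLocalMax f t) :
    IsLocalMax (fun s => f (-s)) (-t) :=
  IsLocalMax.comp_continuous (g := Neg.neg) (by rwa [neg_neg]) continuousAt_neg

theorem IsLocalMin.comp_neg {f : ℝ → ℝ} {t : ℝ} (h : IsLocalMin f t) :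
    IsLocalMin (fun s => f (-s)) (-t) :=
  IsLocalMin.comp_continuous (g := Neg.neg) (by rwa [neg_neg]) continuousAt_neg

theorem ViscositySubsolution.comp_neg (h : ViscositySubsolution a b g w) :
    ViscositySubsolution (-b) (-a) (fun t => g (-t)) (fun t => w (-t)) := by
  intro t ht φ hφ hmax
  have := h (-t) ⟨lt_neg.1 ht.2, neg_lt.1 ht.1⟩ (fun s => φ (-s)) (hφ.comp differentiable_neg)
    (by simpa only [neg_neg] using hmax.comp_neg)
  rwa [deriv_comp_neg, neg_neg, abs_neg] at this

theorem ViscositySupersolution.comp_neg (h : ViscositySupersolution a b g w) :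
    ViscositySupersolution (-b) (-a) (fun t => g (-t)) (fun t => w (-t)) := by
  intro t ht φ hφ hmin
  have := h (-t) ⟨lt_neg.1 ht.2, neg_lt.1 ht.1⟩ (fun s => φ (-s)) (hφ.comp differentiable_neg)
    (by simpa only [neg_neg] using hmin.comp_neg)
  rwa [deriv_comp_neg, neg_neg, abs_neg] at this

theorem ViscositySupersolution.not_isLocalMin (h : ViscositySupersolution a b g w) {t : ℝ}
    (ht : t ∈ Ioo a b) (hgt : 0 < g t) : ¬ IsLocalMin w t := fun hmin => by
  have := h t ht (fun _ => 0) (differentiable_const 0) (by simpa using hmin)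
  simp only [deriv_const', abs_zero] at this
  linarith

theorem ViscositySubsolution.antitoneOn_sub (h : ViscositySubsolution a b g w)
    (hw : ContinuousOn w (Icc a b)) (hG : Differentiable ℝ G)
    (hG' : ∀ t ∈ Ioo a b, HasDerivAt G (g t) t) : AntitoneOn (fun t => w t - G t) (Icc a b) := by
  intro x hx y hy hxy
  rcases hxy.eq_or_lt with rfl | hxy
  · rfl
  by_contra! hlt
  obtain ⟨t₀, ht₀, ψ, hψ, hψ', hmax⟩ := exists_isLocalMax_sub_of_lt (F := fun t => w t - G t)
    hxy ((hw.sub hG.continuous.continuousOn).mono (Icc_subset_Icc hx.1 hy.2)) hlt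
  have ht₀ab : t₀ ∈ Ioo a b := ⟨hx.1.trans_lt ht₀.1, ht₀.2.trans_le hy.2⟩
  have hφ := (hG' t₀ ht₀ab).fun_add (hψ t₀).hasDerivAt
  have := h t₀ ht₀ab (fun t => G t + ψ t) (hG.add hψ)
    (by simpa only [sub_add_eq_sub_sub] using hmax)
  rw [hφ.deriv] at this
  linarith [le_abs_self (g t₀ + deriv ψ t₀)]

theorem ViscositySupersolution.monotoneOn_sub (h : ViscositySupersolution a b g w)
    (hw : ContinuousOn w (Icc a b)) (hmono : MonotoneOn w (Icc a b)) (hG : Differentiable ℝ G)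
    (hG' : ∀ t ∈ Ioo a b, HasDerivAt G (g t) t) : MonotoneOn (fun t => w t - G t) (Icc a b) := by
  intro x hx y hy hxy
  rcases hxy.eq_or_lt with rfl | hxy
  · rfl
  by_contra! hlt
  obtain ⟨t₀, ht₀, ψ, hψ, hψ', hmax⟩ := exists_isLocalMax_sub_of_lt (F := fun t => -(w t - G t))
    hxy ((hw.sub hG.continuous.continuousOn).neg.mono (Icc_subset_Icc hx.1 hy.2)) (neg_lt_neg hlt)
  have ht₀ab : t₀ ∈ Ioo a b := ⟨hx.1.trans_lt ht₀.1, ht₀.2.trans_le hy.2⟩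
  have hmin : IsLocalMin (fun t => w t - (G t - ψ t)) t₀ :=
    hmax.neg.congr (Eventually.of_forall fun t => by ring)
  have hφ := (hG' t₀ ht₀ab).fun_sub (hψ t₀).hasDerivAt
  -- monotonicity rules out the branch `deriv φ t₀ ≤ -g t₀` of the supersolution inequality
  have hφ_nonneg := hmono.nonneg_of_isLocalMin_sub (Icc_mem_nhds ht₀ab.1 ht₀ab.2) hmin hφ
  have := h t₀ ht₀ab (fun t => G t - ψ t) (hG.sub hψ) hmin
  rw [hφ.deriv, abs_of_nonneg hφ_nonneg] at this
  linarith

theorem hasDerivAt_of_isMaxOn_right (hg : ContinuousOn g (Icc a b))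
    (hgpos : ∀ t ∈ Ioo a b, 0 < g t) (hw : ContinuousOn w (Icc a b))
    (hsub : ViscositySubsolution a b g w) (hsuper : ViscositySupersolution a b g w)
    (hmax : IsMaxOn w (Icc a b) b) {t : ℝ} (ht : t ∈ Ioo a b) :
    HasDerivAt w (g t) t := by
  obtain ⟨G, hG, hG'⟩ := hg.exists_hasDerivAt_eq (ht.1.trans ht.2).le
  have hG'' : ∀ s ∈ Ioo a b, HasDerivAt G (g s) s := fun s hs => hG' s (Ioo_subset_Icc_self hs)
  have hmono := monotoneOn_of_isMaxOn_right hw hmax fun s hs =>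
    hsuper.not_isLocalMin hs (hgpos s hs)
  have hanti_sub := hsub.antitoneOn_sub hw hG hG''
  have hmono_sub := hsuper.monotoneOn_sub hw hmono hG hG''
  have htI : t ∈ Icc a b := Ioo_subset_Icc_self ht
  have hconst : ∀ s ∈ Icc a b, w s = G s + (w t - G t) := fun s hs => by
    rcases le_total s t with hst | hts
    · linarith [hanti_sub hs htI hst, hmono_sub hs htI hst]
    · linarith [hanti_sub htI hs hts, hmono_sub htI hs hts]
  exact ((hG' t htI).add_const _).congr_of_eventuallyEq
    (eventually_of_mem (Icc_mem_nhds ht.1 ht.2) hconst)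

theorem hasDerivAt_of_isMaxOn_left (hg : ContinuousOn g (Icc a b))
    (hgpos : ∀ t ∈ Ioo a b, 0 < g t) (hw : ContinuousOn w (Icc a b))
    (hsub : ViscositySubsolution a b g w) (hsuper : ViscositySupersolution a b g w)
    (hmax : IsMaxOn w (Icc a b) a) {t : ℝ} (ht : t ∈ Ioo a b) :
    HasDerivAt w (-g t) t := by
  have h := hasDerivAt_of_isMaxOn_right (hg.comp continuousOn_neg fun _ => neg_mem_Icc_iff.2)
    (fun s hs => hgpos (-s) ⟨lt_neg.1 hs.2, neg_lt.1 hs.1⟩)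
    (hw.comp continuousOn_neg fun _ => neg_mem_Icc_iff.2) hsub.comp_neg hsuper.comp_neg
    (fun s hs => by simpa using hmax (neg_mem_Icc_iff.2 hs))
    (t := -t) ⟨neg_lt_neg ht.2, neg_lt_neg ht.1⟩
  simpa [Function.comp_def] using h.comp t (hasDerivAt_neg t)

theorem hasDerivAt_of_isMaxOn_of_lt (hg : ContinuousOn g (Icc a b))
    (hgpos : ∀ t ∈ Ioo a b, 0 < g t) (hw : ContinuousOn w (Icc a b))
    (hsub : ViscositySubsolution a b g w) (hsuper : ViscositySupersolution a b g w) {c : ℝ}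
    (hc : c ∈ Icc a b) (hmax : IsMaxOn w (Icc a b) c) {t : ℝ} (ht : t ∈ Ioo a c) :
    HasDerivAt w (g t) t :=
  have hL : Icc a c ⊆ Icc a b := Icc_subset_Icc_right hc.2
  hasDerivAt_of_isMaxOn_right (hg.mono hL) (fun s hs => hgpos s ⟨hs.1, hs.2.trans_le hc.2⟩)
    (hw.mono hL) (hsub.mono le_rfl hc.2) (hsuper.mono le_rfl hc.2) (hmax.on_subset hL) ht

theorem hasDerivAt_of_isMaxOn_of_gt (hg : ContinuousOn g (Icc a b))
    (hgpos : ∀ t ∈ Ioo a b, 0 < g t) (hw : ContinuousOn w (Icc a b))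
    (hsub : ViscositySubsolution a b g w) (hsuper : ViscositySupersolution a b g w) {c : ℝ}
    (hc : c ∈ Icc a b) (hmax : IsMaxOn w (Icc a b) c) {t : ℝ} (ht : t ∈ Ioo c b) :
    HasDerivAt w (-g t) t :=
  have hR : Icc c b ⊆ Icc a b := Icc_subset_Icc_left hc.1
  hasDerivAt_of_isMaxOn_left (hg.mono hR) (fun s hs => hgpos s ⟨hc.1.trans_lt hs.1, hs.2⟩)
    (hw.mono hR) (hsub.mono hc.1 le_rfl) (hsuper.mono hc.1 le_rfl) (hmax.on_subset hR) ht

end Viscosity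

theorem solution_structure (a b : ℝ) (hab : a < b) (g w : ℝ → ℝ)
    (hg : ContinuousOn g (Set.Icc a b)) (hgpos : ∀ t ∈ Set.Icc a b, 0 < g t)
    (hw : ContinuousOn w (Set.Icc a b))
    (hsub : ViscositySubsolution a b g w) (hsuper : ViscositySupersolution a b g w) :
    ∃ tbar ∈ Set.Icc a b,
      (∀ t ∈ Set.Ioo a b, t < tbar → HasDerivAt w (g t) t) ∧
      (∀ t ∈ Set.Ioo a b, tbar < t → HasDerivAt w (-(g t)) t) ∧
      (∀ t1 ∈ Set.Ioo a b, ∀ t2 ∈ Set.Ioo a b,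
        ¬ DifferentiableAt ℝ w t1 → ¬ DifferentiableAt ℝ w t2 → t1 = t2) ∧
      (∀ᵐ t ∂(volume.restrict (Set.Ioo a b)), |deriv w t| = g t) := by
  obtain ⟨tbar, htbar, hmax⟩ := isCompact_Icc.exists_isMaxOn (nonempty_Icc.2 hab.le) hw
  have hgpos' : ∀ t ∈ Ioo a b, 0 < g t := fun t ht => hgpos t (Ioo_subset_Icc_self ht)
  have hleft : ∀ t ∈ Ioo a b, t < tbar → HasDerivAt w (g t) t := fun t ht htt =>
    hasDerivAt_of_isMaxOn_of_lt hg hgpos' hw hsub hsuper htbar hmax ⟨ht.1, htt⟩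
  have hright : ∀ t ∈ Ioo a b, tbar < t → HasDerivAt w (-g t) t := fun t ht htt =>
    hasDerivAt_of_isMaxOn_of_gt hg hgpos' hw hsub hsuper htbar hmax ⟨htt, ht.2⟩
  have hregular : ∀ t ∈ Ioo a b, t ≠ tbar → DifferentiableAt ℝ w t ∧ |deriv w t| = g t := by
    intro t ht hne
    rcases hne.lt_or_gt with htt | htt
    · exact ⟨(hleft t ht htt).differentiableAt,
        by rw [(hleft t ht htt).deriv, abs_of_pos (hgpos' t ht)]⟩
    · exact ⟨(hright t ht htt).differentiableAt,
        by rw [(hright t ht htt).deriv, abs_neg, abs_of_pos (hgpos' t ht)]⟩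
  have hsingular : ∀ t ∈ Ioo a b, ¬ DifferentiableAt ℝ w t → t = tbar := fun t ht hd =>
    by_contra fun hne => hd (hregular t ht hne).1
  refine ⟨tbar, htbar, hleft, hright, fun t₁ h₁ t₂ h₂ hd₁ hd₂ => ?_, ?_⟩
  · rw [hsingular t₁ h₁ hd₁, hsingular t₂ h₂ hd₂]
  · filter_upwards [ae_restrict_mem measurableSet_Ioo, (countable_singleton tbar).ae_notMem _]
      with t ht hne using (hregular t ht hne).2
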